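/- arXiv:2508.11441 — 3 statements merged into one kernel-verified Lean document; each statement's English description precedes it below -/
import Mathlib

section
/- Let X ⊆ ℝ^d be compact, let P be a probability distribution on X with a positive density with respect to Lebesgue measure, and let M > 0. Let F = L^M be the class of affine linear functions f(x) = wᵀx + b with ‖w‖ < M and |b| < M. Then for every f ∈ F, every x_0 in the interior of X, and every n ≥ 1, the gradient explanation E_grad(f, x_0) = ∇f(x_0) is non-trivial (F_explain ⊊ F_predict) and informative (R_n(F_explain) < R_n(F_predict)). -/
open MeasureTheory
open scoped ENNReal RealInnerProductSpace

/-- The distribution of one sample: a point drawn from `μ` together with an independent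
Rademacher sign (uniform on `{-1, +1}`), taken as an `n`-fold product. -/
noncomputable def sampleMeasure {α : Type*} [MeasurableSpace α] (μ : Measure α) (n : ℕ) :
    Measure (Fin n → α × ℝ) :=
  Measure.pi fun _ =>
    μ.prod ((2 : ℝ≥0∞)⁻¹ • Measure.dirac (-1 : ℝ) + (2 : ℝ≥0∞)⁻¹ • Measure.dirac (1 : ℝ))

/-- Rademacher complexity `R_n(F) = E_{x,σ} sup_{g ∈ F} (1/n) ∑ σ_i g(x_i)`. -/
noncomputable def rademacher {α : Type*} [MeasurableSpace α] (μ : Measure α) (n : ℕ)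
    (F : Set (α → ℝ)) : ℝ :=
  ∫ ω, sSup ((fun g => (n : ℝ)⁻¹ * ∑ i, (ω i).2 * g (ω i).1) '' F) ∂(sampleMeasure μ n)

/-!
On `X` a member of `F` is an affine function `x ↦ ⟪w, x⟫ + b`, and at the interior point `x₀`
its gradient is `w`. Prescribing the value and the gradient at `x₀` therefore pins down `(w, b)`,
so the supremum defining `R_n(F_explain)` is a.s. the single average `(1/n) ∑ σᵢ f(xᵢ)`.
`F_predict` also contains the tilted function `f + t ⟪v, · - x₀⟫` for small `t > 0`, which beats
`f` on every sample with all `σᵢ = 1` and all `xᵢ` in the half-space `⟪v, x - x₀⟫ > 0`. Since `μ`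
has a density, hyperplanes are `μ`-null, so `v` can be chosen to give that event positive
probability, and the inequality between the two expectations is strict.
-/

open Filter Topology Set

noncomputable def rademacherSign : Measure ℝ :=
  (2 : ℝ≥0∞)⁻¹ • Measure.dirac (-1 : ℝ) + (2 : ℝ≥0∞)⁻¹ • Measure.dirac (1 : ℝ)

instance : IsProbabilityMeasure rademacherSign :=
  ⟨by simp [rademacherSign, ENNReal.inv_two_add_inv_two]⟩

lemma rademacherSign_singleton_one : rademacherSign {1} = 2⁻¹ := by
  simp [rademacherSign, Measure.dirac_apply' _ (measurableSet_singleton _), Pi.single_apply]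
  norm_num

lemma ae_abs_eq_one_rademacherSign : ∀ᵐ σ ∂rademacherSign, |σ| = 1 := by
  simp [rademacherSign]

section Sample

variable {α : Type*} {n : ℕ}

noncomputable def empiricalCorrelation (ω : Fin n → α × ℝ) (g : α → ℝ) : ℝ :=
  (n : ℝ)⁻¹ * ∑ i, (ω i).2 * g (ω i).1

lemma empiricalCorrelation_sub (ω : Fin n → α × ℝ) (g h : α → ℝ) :
    empiricalCorrelation ω (g - h) = empiricalCorrelation ω g - empiricalCorrelation ω h := by
  simp only [empiricalCorrelation, Pi.sub_apply, mul_sub, Finset.sum_sub_distrib]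

lemma empiricalCorrelation_congr {X : Set α} {ω : Fin n → α × ℝ} (hω : ∀ i, (ω i).1 ∈ X)
    {g h : α → ℝ} (hgh : EqOn g h X) : empiricalCorrelation ω g = empiricalCorrelation ω h := by
  simp only [empiricalCorrelation, hgh (hω _)]

lemma abs_empiricalCorrelation_le {ω : Fin n → α × ℝ} {g : α → ℝ} {C : ℝ} (hC : 0 ≤ C)
    (hσ : ∀ i, |(ω i).2| = 1) (hg : ∀ i, |g (ω i).1| ≤ C) :
    |empiricalCorrelation ω g| ≤ C := by
  have hsum : |∑ i, (ω i).2 * g (ω i).1| ≤ n * C :=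
    calc |∑ i, (ω i).2 * g (ω i).1| ≤ ∑ i, |(ω i).2 * g (ω i).1| := Finset.abs_sum_le_sum_abs _ _
      _ ≤ ∑ _i : Fin n, C := Finset.sum_le_sum fun i _ => by rw [abs_mul, hσ, one_mul]; exact hg i
      _ = n * C := by simp
  rw [empiricalCorrelation, abs_mul, abs_inv, Nat.abs_cast]
  rcases n.eq_zero_or_pos with rfl | hn
  · simpa using hC
  · rwa [inv_mul_le_iff₀ (by positivity)]

variable [MeasurableSpace α] {μ : Measure α}

lemma sampleMeasure_eq (μ : Measure α) (n : ℕ) :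
    sampleMeasure μ n = Measure.pi fun _ => μ.prod rademacherSign := rfl

instance [IsProbabilityMeasure μ] : IsProbabilityMeasure (sampleMeasure μ n) := by
  rw [sampleMeasure_eq]
  infer_instance

lemma ae_sampleMeasure [SigmaFinite μ] {X : Set α} (hX : ∀ᵐ x ∂μ, x ∈ X) :
    ∀ᵐ ω ∂sampleMeasure μ n, ∀ i, (ω i).1 ∈ X ∧ |(ω i).2| = 1 := by
  have hpair : ∀ᵐ z ∂μ.prod rademacherSign, z.1 ∈ X ∧ |z.2| = 1 :=
    (Measure.quasiMeasurePreserving_fst.ae hX).and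
      (Measure.quasiMeasurePreserving_snd.ae ae_abs_eq_one_rademacherSign)
  exact ae_all_iff.2 fun i =>
    (Measure.tendsto_eval_ae_ae (μ := fun _ => μ.prod rademacherSign) (i := i)).eventually hpair

lemma sampleMeasure_setOf_empiricalCorrelation_pos_ne_zero [SigmaFinite μ] (hn : n ≠ 0)
    {H : Set α} (hH : μ H ≠ 0) {g : α → ℝ} (hg : ∀ x ∈ H, 0 < g x) :
    sampleMeasure μ n {ω | 0 < empiricalCorrelation ω g} ≠ 0 := by
  have hsub : univ.pi (fun _ => H ×ˢ {1}) ⊆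
      {ω : Fin n → α × ℝ | 0 < empiricalCorrelation ω g} := by
    intro ω hω
    simp only [mem_univ_pi, mem_prod, mem_singleton_iff] at hω
    rw [mem_ofPred_eq, empiricalCorrelation]
    refine mul_pos (by positivity)
      (Finset.sum_pos (fun i _ => ?_) ⟨⟨0, Nat.pos_of_ne_zero hn⟩, Finset.mem_univ _⟩)
    rw [(hω i).2, one_mul]
    exact hg _ (hω i).1
  intro h
  have hpi := measure_mono_null hsub h
  simp [sampleMeasure_eq, Measure.pi_pi, Measure.prod_prod, rademacherSign_singleton_one, hH] at hpi

lemma rademacher_eq_integral (μ : Measure α) (n : ℕ) (F : Set (α → ℝ)) :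
    rademacher μ n F = ∫ ω, sSup (empiricalCorrelation ω '' F) ∂sampleMeasure μ n := rfl

lemma rademacher_congr [SigmaFinite μ] {X : Set α} (hX : ∀ᵐ x ∂μ, x ∈ X) {G H : Set (α → ℝ)}
    (hGH : ∀ g ∈ G, ∃ h ∈ H, EqOn g h X) (hHG : ∀ h ∈ H, ∃ g ∈ G, EqOn g h X) :
    rademacher μ n G = rademacher μ n H := by
  refine integral_congr_ae ((ae_sampleMeasure hX).mono fun ω hω => ?_)
  have hω : ∀ i, (ω i).1 ∈ X := fun i => (hω i).1
  refine congrArg sSup (Set.ext fun t => ⟨?_, ?_⟩)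
  · rintro ⟨g, hg, rfl⟩
    obtain ⟨h, hh, hgh⟩ := hGH g hg
    exact ⟨h, hh, (empiricalCorrelation_congr hω hgh).symm⟩
  · rintro ⟨h, hh, rfl⟩
    obtain ⟨g, hg, hgh⟩ := hHG h hh
    exact ⟨g, hg, empiricalCorrelation_congr hω hgh⟩

end Sample

section Supremum

variable {Ω E : Type*} [PseudoMetricSpace E] [ProperSpace E] {P : Set E}

lemma bddAbove_image_of_isBounded {φ : E → ℝ} (hφ : Continuous φ) (hP : Bornology.IsBounded P) :
    BddAbove (φ '' P) :=
  (hP.isCompact_closure.bddAbove_image hφ.continuousOn).mono (image_mono subset_closure)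

lemma measurable_sSup_image_of_isBounded [TopologicalSpace Ω] [MeasurableSpace Ω]
    [OpensMeasurableSpace Ω] {φ : Ω → E → ℝ} (hP : Bornology.IsBounded P)
    (hφω : ∀ p, Continuous fun ω => φ ω p) (hφp : ∀ ω, Continuous (φ ω)) :
    Measurable fun ω => sSup (φ ω '' P) := by
  simp only [image_eq_range]
  refine (lowerSemicontinuous_ciSup (f := fun (p : P) ω => φ ω p) (fun ω => ?_)
    fun p => (hφω p).lowerSemicontinuous).measurable
  rw [← image_eq_range]
  exact bddAbove_image_of_isBounded (hφp ω) hP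

end Supremum

lemma MeasureTheory.integral_lt_integral_of_ae_le_of_measure_setOf_lt_ne_zero {Ω : Type*}
    [MeasurableSpace Ω] {ν : Measure Ω} {f g : Ω → ℝ} (hf : Integrable f ν) (hg : Integrable g ν)
    (hle : f ≤ᵐ[ν] g) (hlt : ν {ω | f ω < g ω} ≠ 0) : ∫ ω, f ω ∂ν < ∫ ω, g ω ∂ν := by
  rw [← sub_pos, ← integral_sub hg hf, integral_pos_iff_support_of_nonneg_ae
    (hle.mono fun _ => sub_nonneg.2) (hg.sub hf)]
  exact pos_iff_ne_zero.2 (mt (measure_mono_null fun ω hω => (sub_pos.2 hω).ne') hlt)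

section Affine

variable {E : Type*} [NormedAddCommGroup E] [InnerProductSpace ℝ E]

def affineFun (p : E × ℝ) (x : E) : ℝ := ⟪p.1, x⟫ + p.2

lemma abs_affineFun_le {p : E × ℝ} {x : E} {K R : ℝ} (hp : ‖p‖ ≤ K) (hx : ‖x‖ ≤ R) :
    |affineFun p x| ≤ K * R + K := by
  have hK : 0 ≤ K := (norm_nonneg p).trans hp
  calc |affineFun p x| ≤ ‖p.1‖ * ‖x‖ + ‖p.2‖ :=
        (abs_add_le _ _).trans (add_le_add (abs_real_inner_le_norm _ _) le_rfl)
    _ ≤ K * R + K := add_le_add (mul_le_mul ((norm_fst_le p).trans hp) hx (norm_nonneg _) hK)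
        ((norm_snd_le p).trans hp)

lemma hasGradientAt_affineFun [CompleteSpace E] (p : E × ℝ) (x : E) :
    HasGradientAt (affineFun p) p.1 x := by
  have hdual : (InnerProductSpace.toDual ℝ E p.1 : E →L[ℝ] ℝ) = innerSL ℝ p.1 := by
    ext y
    simp
  rw [hasGradientAt_iff_hasFDerivAt, hdual]
  exact ((innerSL ℝ p.1).hasFDerivAt).add_const p.2

lemma gradient_eq_of_eqOn_affineFun [CompleteSpace E] {X : Set E} {x₀ : E} (hx₀ : x₀ ∈ interior X)
    {g : E → ℝ} {p : E × ℝ} (hg : EqOn g (affineFun p) X) : gradient g x₀ = p.1 := by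
  have : g =ᶠ[𝓝 x₀] affineFun p :=
    eventually_of_mem (mem_interior_iff_mem_nhds.1 hx₀) hg
  rw [this.gradient_eq, (hasGradientAt_affineFun p x₀).gradient]

lemma exists_ne_zero_measure_setOf_inner_sub_pos_ne_zero [Nontrivial E] [FiniteDimensional ℝ E]
    [MeasurableSpace E] [BorelSpace E] {ν μ : Measure E} [ν.IsAddHaarMeasure] (hμν : μ ≪ ν)
    (hμ : μ ≠ 0) (x₀ : E) : ∃ v ≠ (0 : E), μ {x | 0 < ⟪v, x - x₀⟫} ≠ 0 := by
  obtain ⟨v, hv⟩ := exists_ne (0 : E)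
  have hplane : μ {x | ⟪v, x - x₀⟫ = 0} = 0 := by
    have hne : AffineSubspace.mk' x₀ (ℝ ∙ v)ᗮ ≠ ⊤ := by
      intro htop
      have hdir := congrArg AffineSubspace.direction htop
      rw [AffineSubspace.direction_mk', AffineSubspace.direction_top] at hdir
      have hvv : v ∈ (ℝ ∙ v)ᗮ := hdir ▸ Submodule.mem_top
      exact hv (inner_self_eq_zero.1 (Submodule.mem_orthogonal_singleton_iff_inner_right.1 hvv))
    refine hμν (measure_mono_null (fun x hx => ?_) (Measure.addHaar_affineSubspace ν _ hne))
    rw [SetLike.mem_coe, AffineSubspace.mem_mk', vsub_eq_sub]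
    exact Submodule.mem_orthogonal_singleton_iff_inner_right.2 hx
  by_contra! hhalf
  have hcover : univ ⊆ {x | 0 < ⟪v, x - x₀⟫} ∪ {x | 0 < ⟪-v, x - x₀⟫} ∪ {x | ⟪v, x - x₀⟫ = 0} := by
    intro x _
    simp only [mem_union, mem_ofPred_eq, inner_neg_left, neg_pos]
    rcases lt_trichotomy ⟪v, x - x₀⟫ 0 with h | h | h <;> simp [h]
  refine hμ (Measure.measure_univ_eq_zero.1 (measure_mono_null hcover ?_))
  exact measure_union_null (measure_union_null (hhalf v hv) (hhalf (-v) (neg_ne_zero.2 hv))) hplane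

lemma rademacher_singleton_lt_rademacher_image_affineFun [FiniteDimensional ℝ E]
    [MeasurableSpace E] [BorelSpace E] {μ : Measure E} [IsProbabilityMeasure μ] {n : ℕ}
    {X : Set E} (hX : Bornology.IsBounded X) (hμX : ∀ᵐ x ∂μ, x ∈ X) {P : Set (E × ℝ)}
    (hP : Bornology.IsBounded P) {p q : E × ℝ} (hp : p ∈ P) (hq : q ∈ P)
    (hpq : sampleMeasure μ n {ω | 0 < empiricalCorrelation ω (affineFun q - affineFun p)} ≠ 0) :
    rademacher μ n {affineFun p} < rademacher μ n (affineFun '' P) := by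
  set S := fun (ω : Fin n → E × ℝ) (r : E × ℝ) => empiricalCorrelation ω (affineFun r)
  have hSω : ∀ r, Continuous fun ω => S ω r := fun r => by
    simp only [S, empiricalCorrelation, affineFun]
    fun_prop
  have hSr : ∀ ω, Continuous (S ω) := fun ω => by
    simp only [S, empiricalCorrelation, affineFun]
    fun_prop
  have hSup : ∀ ω, ∀ r ∈ P, S ω r ≤ sSup (S ω '' P) := fun ω r hr =>
    le_csSup (bddAbove_image_of_isBounded (hSr ω) hP) (mem_image_of_mem _ hr)
  obtain ⟨R, hR0, hR⟩ := hX.exists_pos_norm_le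
  obtain ⟨K, hK0, hK⟩ := hP.exists_pos_norm_le
  have hbound : ∀ᵐ ω ∂sampleMeasure μ n, ∀ r ∈ P, |S ω r| ≤ K * R + K :=
    (ae_sampleMeasure hμX).mono fun ω hω r hr => abs_empiricalCorrelation_le (by positivity)
      (fun i => (hω i).2) fun i => abs_affineFun_le (hK r hr) (hR _ (hω i).1)
  have hlt : {ω | 0 < empiricalCorrelation ω (affineFun q - affineFun p)} ⊆
      {ω | S ω p < sSup (S ω '' P)} := fun ω hω => by
    rw [mem_ofPred_eq, empiricalCorrelation_sub, sub_pos] at hω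
    exact hω.trans_le (hSup ω q hq)
  simp only [rademacher_eq_integral, image_singleton, image_image, csSup_singleton]
  refine integral_lt_integral_of_ae_le_of_measure_setOf_lt_ne_zero ?_ ?_
    (Eventually.of_forall fun ω => hSup ω p hp) fun h => hpq (measure_mono_null hlt h)
  · exact Integrable.of_bound (hSω p).measurable.aestronglyMeasurable _
      (hbound.mono fun ω hω => hω p hp)
  · refine Integrable.of_bound (measurable_sSup_image_of_isBounded hP hSω hSr).aestronglyMeasurable
      (K * R + K) (hbound.mono fun ω hω => abs_le.2 ⟨?_, ?_⟩)
    · exact (abs_le.1 (hω p hp)).1.trans (hSup ω p hp)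
    · exact csSup_le ⟨_, mem_image_of_mem _ hp⟩ fun _ ⟨r, hr, hrS⟩ => hrS ▸ (abs_le.1 (hω r hr)).2

def affineClass (X : Set E) (M : ℝ) : Set (E → ℝ) :=
  {g | ∃ r : E × ℝ, ‖r.1‖ < M ∧ |r.2| < M ∧ EqOn g (affineFun r) X}

def affineParams (M : ℝ) (x₀ : E) (y : ℝ) : Set (E × ℝ) :=
  {r | ‖r.1‖ < M ∧ |r.2| < M ∧ affineFun r x₀ = y}

lemma isBounded_affineParams (M : ℝ) (x₀ : E) (y : ℝ) :
    Bornology.IsBounded (affineParams M x₀ y) :=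
  (Metric.isBounded_closedBall (x := 0) (r := M)).subset
    fun _ hr => mem_closedBall_zero_iff.2 (norm_prod_le_iff.2 ⟨hr.1.le, hr.2.1.le⟩)

lemma exists_affineParams_tilt {M y : ℝ} {x₀ v : E} {p : E × ℝ} (hp : p ∈ affineParams M x₀ y)
    (hv : v ≠ 0) : ∃ q ∈ affineParams M x₀ y,
      q.1 ≠ p.1 ∧ ∀ x, 0 < ⟪v, x - x₀⟫ → 0 < affineFun q x - affineFun p x := by
  obtain ⟨hpw, hpb, hpx₀⟩ := hp
  have hnear : ∀ᶠ t in 𝓝 (0 : ℝ), ‖p.1 + t • v‖ < M ∧ |p.2 - t * ⟪v, x₀⟫| < M := by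
    refine ((Continuous.tendsto' ?_ 0 ‖p.1‖ ?_).eventually_lt_const hpw).and
      ((Continuous.tendsto' ?_ 0 |p.2| ?_).eventually_lt_const hpb) <;> first | fun_prop | simp
  obtain ⟨t, ht, hqw, hqb⟩ := hnear.exists_gt
  have hdiff : ∀ x, affineFun (p.1 + t • v, p.2 - t * ⟪v, x₀⟫) x - affineFun p x =
      t * ⟪v, x - x₀⟫ := fun x => by
    simp only [affineFun, inner_add_left, real_inner_smul_left, inner_sub_right]
    ring
  refine ⟨_, ⟨hqw, hqb, ?_⟩, by simpa [ht.ne'] using hv, fun x hx => hdiff x ▸ mul_pos ht hx⟩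
  rw [← hpx₀, ← sub_eq_zero, hdiff, sub_self, inner_zero_right, mul_zero]

lemma rademacher_affineClass_explain [CompleteSpace E] [MeasurableSpace E]
    {μ : Measure E} [SigmaFinite μ] {n : ℕ} {X : Set E} (hμX : ∀ᵐ x ∂μ, x ∈ X) {M : ℝ} {x₀ : E}
    (hx₀ : x₀ ∈ interior X) {f : E → ℝ} {p : E × ℝ} (hf : f ∈ affineClass X M)
    (hfp : EqOn f (affineFun p) X) :
    rademacher μ n {g ∈ affineClass X M | g x₀ = f x₀ ∧ gradient g x₀ = gradient f x₀} =
      rademacher μ n {affineFun p} := by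
  refine rademacher_congr hμX (fun g ⟨⟨r, _, _, hgr⟩, hgx₀, hggrad⟩ => ⟨_, rfl, ?_⟩)
    fun _ h => ⟨f, ⟨hf, rfl, rfl⟩, h ▸ hfp⟩
  have hx₀X : x₀ ∈ X := interior_subset hx₀
  have h1 : r.1 = p.1 := by
    rw [← gradient_eq_of_eqOn_affineFun hx₀ hgr, hggrad, gradient_eq_of_eqOn_affineFun hx₀ hfp]
  have h2 : r.2 = p.2 := by
    simpa [affineFun, h1] using (hgr hx₀X).symm.trans (hgx₀.trans (hfp hx₀X))
  rwa [← Prod.ext h1 h2]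

lemma rademacher_affineClass_predict [MeasurableSpace E] {μ : Measure E} [SigmaFinite μ] {n : ℕ}
    {X : Set E} (hμX : ∀ᵐ x ∂μ, x ∈ X) {M : ℝ} {x₀ : E} (hx₀ : x₀ ∈ X) (y : ℝ) :
    rademacher μ n {g ∈ affineClass X M | g x₀ = y} =
      rademacher μ n (affineFun '' affineParams M x₀ y) := by
  refine rademacher_congr hμX (fun g ⟨⟨r, hr1, hr2, hgr⟩, hgx₀⟩ => ?_) ?_
  · exact ⟨affineFun r, ⟨r, ⟨hr1, hr2, (hgr hx₀).symm.trans hgx₀⟩, rfl⟩, hgr⟩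
  · rintro _ ⟨r, ⟨hr1, hr2, hrx₀⟩, rfl⟩
    exact ⟨affineFun r, ⟨⟨r, hr1, hr2, eqOn_refl _ _⟩, hrx₀⟩, eqOn_refl _ _⟩

end Affine

theorem gradient_informative_on_linear_functions_general
    {d : ℕ} (hd : 0 < d)
    (X : Set (EuclideanSpace ℝ (Fin d))) (hXcompact : IsCompact X)
    (μ : Measure (EuclideanSpace ℝ (Fin d))) [IsProbabilityMeasure μ]
    (ρ : EuclideanSpace ℝ (Fin d) → ℝ≥0∞)
    (hdens : μ = volume.withDensity ρ) (hsupp : μ X = 1)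
    (M : ℝ)
    (F : Set (EuclideanSpace ℝ (Fin d) → ℝ))
    (hF : F = {g | ∃ (w : EuclideanSpace ℝ (Fin d)) (b : ℝ),
        ‖w‖ < M ∧ |b| < M ∧ ∀ x ∈ X, g x = ⟪w, x⟫ + b})
    (f : EuclideanSpace ℝ (Fin d) → ℝ) (hf : f ∈ F)
    (x₀ : EuclideanSpace ℝ (Fin d)) (hx₀ : x₀ ∈ interior X)
    (n : ℕ) (hn : 1 ≤ n) :
    {g ∈ F | g x₀ = f x₀ ∧ gradient g x₀ = gradient f x₀} ⊂ {g ∈ F | g x₀ = f x₀} ∧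
    rademacher μ n {g ∈ F | g x₀ = f x₀ ∧ gradient g x₀ = gradient f x₀} <
      rademacher μ n {g ∈ F | g x₀ = f x₀} := by
  have : NeZero d := ⟨hd.ne'⟩
  have hx₀X : x₀ ∈ X := interior_subset hx₀
  have hμX : ∀ᵐ x ∂μ, x ∈ X := (mem_ae_iff_prob_eq_one hXcompact.measurableSet).2 hsupp
  obtain rfl : F = affineClass X M := by simp [hF, affineClass, Prod.exists, EqOn, affineFun]
  obtain ⟨p, hpw, hpb, hfp⟩ := id hf
  have hpP : p ∈ affineParams M x₀ (f x₀) := ⟨hpw, hpb, (hfp hx₀X).symm⟩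
  obtain ⟨v, hv0, hv⟩ := exists_ne_zero_measure_setOf_inner_sub_pos_ne_zero
    (hdens ▸ withDensity_absolutelyContinuous _ _) (IsProbabilityMeasure.ne_zero μ) x₀
  obtain ⟨q, hqP, hqp, hpq⟩ := exists_affineParams_tilt hpP hv0
  refine ⟨(ssubset_iff_of_subset ?_).2 ⟨affineFun q, ?_, ?_⟩, ?_⟩
  · exact fun g hg => ⟨hg.1, hg.2.1⟩
  · exact ⟨⟨q, hqP.1, hqP.2.1, eqOn_refl _ _⟩, hqP.2.2⟩
  · rintro ⟨-, -, hgrad⟩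
    rw [gradient_eq_of_eqOn_affineFun hx₀ (eqOn_refl _ _),
      gradient_eq_of_eqOn_affineFun hx₀ hfp] at hgrad
    exact hqp hgrad
  · rw [rademacher_affineClass_explain hμX hx₀ hf hfp, rademacher_affineClass_predict hμX hx₀X]
    exact rademacher_singleton_lt_rademacher_image_affineFun hXcompact.isBounded hμX
      (isBounded_affineParams M x₀ _) hpP hqP
      (sampleMeasure_setOf_empiricalCorrelation_pos_ne_zero (by omega) hv hpq)

/-- **Gradient explanations on linear functions are informative.** -/
theorem gradient_informative_on_linear_functions
    {d : ℕ} (hd : 0 < d)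
    (X : Set (EuclideanSpace ℝ (Fin d))) (hXcompact : IsCompact X)
    (μ : Measure (EuclideanSpace ℝ (Fin d))) [IsProbabilityMeasure μ]
    (ρ : EuclideanSpace ℝ (Fin d) → ℝ≥0∞)
    (hdens : μ = volume.withDensity ρ) (hpos : ∀ x ∈ X, 0 < ρ x) (hsupp : μ X = 1)
    (M : ℝ) (hM : 0 < M)
    (F : Set (EuclideanSpace ℝ (Fin d) → ℝ))
    (hF : F = {g | ∃ (w : EuclideanSpace ℝ (Fin d)) (b : ℝ),
        ‖w‖ < M ∧ |b| < M ∧ ∀ x ∈ X, g x = ⟪w, x⟫ + b})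
    (f : EuclideanSpace ℝ (Fin d) → ℝ) (hf : f ∈ F)
    (x₀ : EuclideanSpace ℝ (Fin d)) (hx₀ : x₀ ∈ interior X)
    (n : ℕ) (hn : 1 ≤ n) :
    {g ∈ F | g x₀ = f x₀ ∧ gradient g x₀ = gradient f x₀} ⊂ {g ∈ F | g x₀ = f x₀} ∧
    rademacher μ n {g ∈ F | g x₀ = f x₀ ∧ gradient g x₀ = gradient f x₀} <
      rademacher μ n {g ∈ F | g x₀ = f x₀} :=
  gradient_informative_on_linear_functions_general hd X hXcompact μ ρ hdens hsupp M F hF f hf x₀ hx₀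
    n hn
end

section
/- Let X ⊆ ℝ^d be compact, let P be a probability distribution on X with a positive density with respect to Lebesgue measure, and let M, ε > 0. Let F = L^M_ε be the class of noisy bounded linear functions: differentiable f: X → ℝ such that there exists an affine linear g(x) = wᵀx + b with ‖w‖ < M, |b| < M and g(x) − ε < f(x) < g(x) + ε for all x. Then for every f ∈ F, every x_0 in the interior of X, and every n ≥ 1, the gradient explanation E_grad(f, x_0) = ∇f(x_0) is non-trivial (F_explain ⊊ F_predict) but non-informative (R_n(F_explain) = R_n(F_predict)). -/
open MeasureTheory
open scoped ENNReal RealInnerProductSpace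

/-!
Adding `⟪v, x - x₀⟫ * c x`, with `c` a small bump around `x₀`, to a member of `L^M_ε` keeps it in
the class (the tube is open and `X` compact), fixes its value at `x₀` and shifts its gradient
there by `v`. As `μ` has a density, the sample points almost surely avoid `x₀`, so the bump can
be chosen to miss them: every function of `F_predict` agrees on the sample with one of
`F_explain`, and the two suprema coincide sample by sample.
-/

section Perturbation

variable {E : Type*} [NormedAddCommGroup E] [InnerProductSpace ℝ E] [CompleteSpace E]

/-- The class `L^M_ε`. -/
def noisyLinearClass (X : Set E) (M ε : ℝ) : Set (E → ℝ) :=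
  {g | (∀ x ∈ X, DifferentiableAt ℝ g x) ∧
    ∃ (w : E) (b : ℝ), ‖w‖ < M ∧ |b| < M ∧ ∀ x ∈ X, ⟪w, x⟫ + b - ε < g x ∧ g x < ⟪w, x⟫ + b + ε}

lemma hasGradientAt_inner_sub (v x₀ x : E) : HasGradientAt (fun y => ⟪v, y - x₀⟫) v x := by
  have h := ((innerSL ℝ v).hasFDerivAt (x := x)).sub_const ⟪v, x₀⟫
  simp only [innerSL_apply_apply, ← inner_sub_right] at h
  exact h

lemma HasGradientAt.add {f g : E → ℝ} {f' g' x : E} (hf : HasGradientAt f f' x)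
    (hg : HasGradientAt g g' x) : HasGradientAt (f + g) (f' + g') x := by
  rw [hasGradientAt_iff_hasFDerivAt, map_add]
  exact HasFDerivAt.add hf hg

/-- `φ x = ⟪v, x - x₀⟫ * c x` for a bump `c` that is `1` near `x₀` and whose support radius `s`
satisfies `s ≤ r` and `‖v‖ * s < δ`. -/
lemma exists_small_hasGradientAt_eq_zero_of_le_dist (x₀ v : E) {r δ : ℝ} (hr : 0 < r)
    (hδ : 0 < δ) :
    ∃ φ : E → ℝ, Differentiable ℝ φ ∧ φ x₀ = 0 ∧ HasGradientAt φ v x₀ ∧ (∀ x, |φ x| < δ) ∧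
      ∀ x, r ≤ dist x x₀ → φ x = 0 := by
  set s := min r (δ / (‖v‖ + 1))
  have hs_pos : 0 < s := lt_min hr (by positivity)
  have hvs : ‖v‖ * s < δ := calc
    ‖v‖ * s ≤ ‖v‖ * (δ / (‖v‖ + 1)) := mul_le_mul_of_nonneg_left (min_le_right _ _) (norm_nonneg v)
    _ < (‖v‖ + 1) * (δ / (‖v‖ + 1)) := by gcongr; linarith
    _ = δ := mul_div_cancel₀ δ (by positivity)
  let c : ContDiffBump x₀ := ⟨s / 2, s, by positivity, by linarith⟩
  have hc : Differentiable ℝ c := (c.contDiff (n := 1)).differentiable (by norm_num)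
  refine ⟨fun x => ⟪v, x - x₀⟫ * c x,
    fun x => (hasGradientAt_inner_sub v x₀ x).differentiableAt.mul (hc x), by simp, ?_, ?_, ?_⟩
  · refine (hasGradientAt_inner_sub v x₀ x₀).congr_of_eventuallyEq ?_
    filter_upwards [c.eventuallyEq_one] with x hx
    simp [hx]
  · intro x
    rcases le_or_gt s (dist x x₀) with hx | hx
    · simpa [c.zero_of_le_dist hx] using hδ
    · calc |⟪v, x - x₀⟫ * c x| = |⟪v, x - x₀⟫| * c x := by rw [abs_mul, abs_of_nonneg c.nonneg]
        _ ≤ ‖v‖ * ‖x - x₀‖ * 1 :=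
          mul_le_mul (abs_real_inner_le_norm v _) c.le_one c.nonneg (by positivity)
        _ ≤ ‖v‖ * s := by
          rw [mul_one, ← dist_eq_norm]; exact mul_le_mul_of_nonneg_left hx.le (norm_nonneg v)
        _ < δ := hvs
  · intro x hx
    simp [c.zero_of_le_dist ((min_le_left _ _).trans hx)]

/-- The tube condition is open, so on a compact `X` it holds with a uniform margin `δ`, which
leaves room to add any perturbation smaller than `δ`. -/
lemma exists_mem_noisyLinearClass_gradient_add {X : Set E} (hX : IsCompact X) {M ε : ℝ}
    {g : E → ℝ} (hg : g ∈ noisyLinearClass X M ε) {x₀ : E} (hx₀ : x₀ ∈ X) (v : E) {r : ℝ}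
    (hr : 0 < r) :
    ∃ g' ∈ noisyLinearClass X M ε, g' x₀ = g x₀ ∧ gradient g' x₀ = gradient g x₀ + v ∧
      ∀ x, r ≤ dist x x₀ → g' x = g x := by
  obtain ⟨hg_diff, w, b, hw, hb, htube⟩ := hg
  have hcont : ContinuousOn (fun x => ε - |g x - (⟪w, x⟫ + b)|) X := by
    have : ContinuousOn g X := fun x hx => (hg_diff x hx).continuousAt.continuousWithinAt
    fun_prop
  obtain ⟨δ, hδ, hmargin⟩ := hX.exists_forall_le' hcont fun x hx => by
    have := htube x hx
    rw [sub_pos, abs_sub_lt_iff]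
    constructor <;> linarith
  obtain ⟨φ, hφ_diff, hφ_x₀, hφ_grad, hφ_small, hφ_out⟩ :=
    exists_small_hasGradientAt_eq_zero_of_le_dist x₀ v hr hδ
  refine ⟨g + φ, ⟨fun x hx => (hg_diff x hx).add (hφ_diff x), w, b, hw, hb, fun x hx => ?_⟩,
    by simp [hφ_x₀], ((hg_diff x₀ hx₀).hasGradientAt.add hφ_grad).gradient,
    fun x hx => by simp [hφ_out x hx]⟩
  have hφx := abs_lt.mp (hφ_small x)
  have hgx := abs_le.mp (show |g x - (⟪w, x⟫ + b)| ≤ ε - δ by linarith [hmargin x hx])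
  simp only [Pi.add_apply]
  constructor <;> linarith

end Perturbation

section Rademacher

variable {α : Type*} [MeasurableSpace α] {μ : Measure α} [SigmaFinite μ]

lemma ae_sampleMeasure_forall_mem {s : Set α} (hs : ∀ᵐ x ∂μ, x ∈ s) (n : ℕ) :
    ∀ᵐ ω ∂sampleMeasure μ n, ∀ i, (ω i).1 ∈ s := by
  set ν : Measure ℝ := (2 : ℝ≥0∞)⁻¹ • Measure.dirac (-1) + (2 : ℝ≥0∞)⁻¹ • Measure.dirac 1
  have : IsProbabilityMeasure ν := ⟨by simp [ν, ENNReal.inv_two_add_inv_two]⟩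
  exact ae_all_iff.2 fun i => (Measure.tendsto_eval_ae_ae (μ := fun _ => μ.prod ν)).eventually
    (Measure.quasiMeasurePreserving_fst.ae hs)

lemma rademacher_eq_of_forall_finite_exists_eqOn {A B : Set (α → ℝ)} {s : Set α}
    (hs : ∀ᵐ x ∂μ, x ∈ s) (hAB : A ⊆ B)
    (hinterp : ∀ g ∈ B, ∀ t : Set α, t.Finite → t ⊆ s → ∃ g' ∈ A, Set.EqOn g' g t) (n : ℕ) :
    rademacher μ n A = rademacher μ n B := by
  refine integral_congr_ae ?_
  filter_upwards [ae_sampleMeasure_forall_mem hs n] with ω hω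
  refine congrArg sSup (Set.Subset.antisymm (Set.image_mono hAB) ?_)
  rintro _ ⟨g, hg, rfl⟩
  obtain ⟨g', hg', heq⟩ :=
    hinterp g hg _ (Set.finite_range fun i => (ω i).1) (Set.range_subset_iff.2 hω)
  exact ⟨g', hg', by simp only [heq (Set.mem_range_self _)]⟩

end Rademacher

theorem gradient_noninformative_on_noisy_linear_functions_general
    {d : ℕ} (hd : 0 < d)
    (X : Set (EuclideanSpace ℝ (Fin d))) (hXcompact : IsCompact X)
    (μ : Measure (EuclideanSpace ℝ (Fin d))) [IsProbabilityMeasure μ]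
    (ρ : EuclideanSpace ℝ (Fin d) → ℝ≥0∞)
    (hdens : μ = volume.withDensity ρ) (hsupp : μ X = 1)
    (M ε : ℝ)
    (F : Set (EuclideanSpace ℝ (Fin d) → ℝ))
    (hF : F = {g | (∀ x ∈ X, DifferentiableAt ℝ g x) ∧
        ∃ (w : EuclideanSpace ℝ (Fin d)) (b : ℝ), ‖w‖ < M ∧ |b| < M ∧
          ∀ x ∈ X, ⟪w, x⟫ + b - ε < g x ∧ g x < ⟪w, x⟫ + b + ε})
    (f : EuclideanSpace ℝ (Fin d) → ℝ) (hf : f ∈ F)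
    (x₀ : EuclideanSpace ℝ (Fin d)) (hx₀ : x₀ ∈ interior X)
    (n : ℕ) :
    {g ∈ F | g x₀ = f x₀ ∧ gradient g x₀ = gradient f x₀} ⊂ {g ∈ F | g x₀ = f x₀} ∧
    rademacher μ n {g ∈ F | g x₀ = f x₀ ∧ gradient g x₀ = gradient f x₀} =
      rademacher μ n {g ∈ F | g x₀ = f x₀} := by
  change F = noisyLinearClass X M ε at hF
  subst hF
  have hx₀X : x₀ ∈ X := interior_subset hx₀
  have : NeZero d := ⟨hd.ne'⟩
  have hmem : ∀ᵐ x ∂μ, x ∈ X := (mem_ae_iff_prob_eq_one hXcompact.isClosed.measurableSet).2 hsupp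
  have hne : ∀ᵐ x ∂μ, x ≠ x₀ :=
    (hdens ▸ withDensity_absolutelyContinuous volume ρ).ae_le (volume.ae_ne x₀)
  have hsample : ∀ᵐ x ∂μ, x ∈ X \ {x₀} := hmem.and hne
  have hsub : {g ∈ noisyLinearClass X M ε | g x₀ = f x₀ ∧ gradient g x₀ = gradient f x₀} ⊆
      {g ∈ noisyLinearClass X M ε | g x₀ = f x₀} := fun g hg => ⟨hg.1, hg.2.1⟩
  refine ⟨(Set.ssubset_iff_of_subset hsub).2 ?_,
    rademacher_eq_of_forall_finite_exists_eqOn hsample hsub ?_ n⟩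
  · obtain ⟨v, hv⟩ := exists_ne (0 : EuclideanSpace ℝ (Fin d))
    obtain ⟨g, hg, hg_x₀, hg_grad, -⟩ :=
      exists_mem_noisyLinearClass_gradient_add hXcompact hf hx₀X v one_pos
    exact ⟨g, ⟨hg, hg_x₀⟩, fun h => hv (add_eq_left.mp (hg_grad ▸ h.2.2))⟩
  · rintro g ⟨hg, hg_x₀⟩ t ht hts
    obtain ⟨r, hr, hball⟩ := Metric.isOpen_iff.mp ht.isClosed.isOpen_compl x₀
      fun h => (hts h).2 rfl
    obtain ⟨g', hg', hg'_x₀, hg'_grad, hg'_out⟩ :=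
      exists_mem_noisyLinearClass_gradient_add hXcompact hg hx₀X
        (gradient f x₀ - gradient g x₀) hr
    refine ⟨g', ⟨hg', hg'_x₀.trans hg_x₀, by rw [hg'_grad, add_sub_cancel]⟩, fun x hx => ?_⟩
    exact hg'_out x (not_lt.mp fun h => hball (Metric.mem_ball.mpr h) hx)

/-- **Gradient explanations on noisy linear functions are not informative.** -/
theorem gradient_noninformative_on_noisy_linear_functions
    {d : ℕ} (hd : 0 < d)
    (X : Set (EuclideanSpace ℝ (Fin d))) (hXcompact : IsCompact X)
    (μ : Measure (EuclideanSpace ℝ (Fin d))) [IsProbabilityMeasure μ]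
    (ρ : EuclideanSpace ℝ (Fin d) → ℝ≥0∞)
    (hdens : μ = volume.withDensity ρ) (hpos : ∀ x ∈ X, 0 < ρ x) (hsupp : μ X = 1)
    (M ε : ℝ) (hM : 0 < M) (hε : 0 < ε)
    (F : Set (EuclideanSpace ℝ (Fin d) → ℝ))
    (hF : F = {g | (∀ x ∈ X, DifferentiableAt ℝ g x) ∧
        ∃ (w : EuclideanSpace ℝ (Fin d)) (b : ℝ), ‖w‖ < M ∧ |b| < M ∧
          ∀ x ∈ X, ⟪w, x⟫ + b - ε < g x ∧ g x < ⟪w, x⟫ + b + ε})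
    (f : EuclideanSpace ℝ (Fin d) → ℝ) (hf : f ∈ F)
    (x₀ : EuclideanSpace ℝ (Fin d)) (hx₀ : x₀ ∈ interior X)
    (n : ℕ) (hn : 1 ≤ n) :
    {g ∈ F | g x₀ = f x₀ ∧ gradient g x₀ = gradient f x₀} ⊂ {g ∈ F | g x₀ = f x₀} ∧
    rademacher μ n {g ∈ F | g x₀ = f x₀ ∧ gradient g x₀ = gradient f x₀} =
      rademacher μ n {g ∈ F | g x₀ = f x₀} :=
  gradient_noninformative_on_noisy_linear_functions_general hd X hXcompact μ ρ hdens hsupp M ε F hF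
    f hf x₀ hx₀ n
end

section
/- Let X = ℝ^d with a probability distribution P having a density with respect to Lebesgue measure. Let F = T_∞ be the class of axis-parallel decision trees on ℝ^d of arbitrary finite depth with values in [−1,1]. Fix f ∈ T_∞, x_0 ∈ ℝ^d, and an anchor explanation (R, p) consisting of an axis-aligned box rule R with x_0 ∈ X_R, P(X_R) > 0, and precision prec(R, f, x_0) = p with 0 < p < 1. Then for every n ∈ ℕ the anchor explanation is non-informative: R_n(F_explain) = R_n(F_predict). -/
/-!
Because `μ` has a density, almost surely the first coordinates of `x₀` and of the sample
points `x₁, …, xₙ` are pairwise distinct. A tree can then cut a thin slab around each of these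
coordinates and take there the value `f x₀`, resp. `sign σᵢ`; outside the slabs it is a single
threshold split labelling the left side like `x₀` and the right side oppositely. The slabs are
chosen so thin that they carry less than `min p (1 - p) · μ XR`, and then the threshold can be
placed (intermediate value theorem for the continuous distribution function of the first
coordinate) to make the precision exactly `p`. This tree belongs to `F_explain` and attains the
largest value `(1/n) ∑ |σᵢ|` of the empirical correlation over all of `F_predict`, so the two
suprema agree almost surely.
-/

open MeasureTheory
open scoped ENNReal

/-- Axis-parallel decision trees of depth at most `K`, defined inductively: a tree of
depth `0` is a constant function; a tree of depth at most `K+1` is either a tree of depth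
at most `K`, or a threshold split on some coordinate between two trees of depth at most `K`. -/
def IsTree {d : ℕ} : ℕ → ((Fin d → ℝ) → ℝ) → Prop
  | 0, g => ∃ c : ℝ, g = fun _ => c
  | K + 1, g => IsTree K g ∨
      ∃ (j : Fin d) (t : ℝ) (g₁ g₂ : (Fin d → ℝ) → ℝ), IsTree K g₁ ∧ IsTree K g₂ ∧
        g = fun x => if x j ≤ t then g₁ x else g₂ x

/-- The precision of the box `XR` for the scoring function `g` at `x₀`:
the conditional probability under `μ` that a point of `XR` receives the same
classification label `sign (g x)` as `x₀`. -/
noncomputable def precision {d : ℕ} (μ : Measure (Fin d → ℝ)) (XR : Set (Fin d → ℝ))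
    (g : (Fin d → ℝ) → ℝ) (x₀ : Fin d → ℝ) : ℝ :=
  (μ {x | x ∈ XR ∧ Real.sign (g x) = Real.sign (g x₀)}).toReal / (μ XR).toReal

open Filter Set Function
open scoped Topology

namespace IsTree

variable {d : ℕ}

lemma mono {K K' : ℕ} {g : (Fin d → ℝ) → ℝ} (h : IsTree K g) (hK : K ≤ K') : IsTree K' g := by
  induction hK with
  | refl => exact h
  | step _ ih => exact Or.inl ih

lemma const (c : ℝ) (K : ℕ) : IsTree (d := d) K fun _ => c :=
  mono (K := 0) ⟨c, rfl⟩ K.zero_le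

lemma split (j : Fin d) (t : ℝ) {K : ℕ} {g₁ g₂ : (Fin d → ℝ) → ℝ} (h₁ : IsTree K g₁)
    (h₂ : IsTree K g₂) : IsTree (K + 1) fun x => if x j ≤ t then g₁ x else g₂ x :=
  Or.inr ⟨j, t, g₁, g₂, h₁, h₂, rfl⟩

end IsTree

section Slabs

variable {d : ℕ} (j : Fin d) (δ : ℝ)

/-- `patchSlabs j δ g L` is `g` overwritten, for each `(t, v) ∈ L`, by the value `v` on the
slab `t - δ < x j ≤ t`; written as nested threshold splits so that it stays a tree. -/
noncomputable def patchSlabs (g : (Fin d → ℝ) → ℝ) : List (ℝ × ℝ) → (Fin d → ℝ) → ℝ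
  | [] => g
  | tv :: L => fun x =>
      if x j ≤ tv.1 then (if x j ≤ tv.1 - δ then patchSlabs g L x else tv.2)
      else patchSlabs g L x

lemma patchSlabs_cons_apply (g : (Fin d → ℝ) → ℝ) (tv : ℝ × ℝ) (L : List (ℝ × ℝ))
    (x : Fin d → ℝ) :
    patchSlabs j δ g (tv :: L) x =
      if x j ∈ Ioc (tv.1 - δ) tv.1 then tv.2 else patchSlabs j δ g L x := by
  by_cases h₁ : x j ≤ tv.1 <;> by_cases h₂ : x j ≤ tv.1 - δ <;> simp [patchSlabs, h₁, h₂]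

lemma IsTree.patchSlabs {K : ℕ} {g : (Fin d → ℝ) → ℝ} (hg : IsTree K g) :
    ∀ L : List (ℝ × ℝ), IsTree (K + 2 * L.length) (patchSlabs j δ g L)
  | [] => hg
  | tv :: L =>
    (((IsTree.patchSlabs hg L).split j (tv.1 - δ) (IsTree.const tv.2 _)).split j tv.1
      (((IsTree.patchSlabs hg L).mono (Nat.le_succ _)))).mono (by simp; omega)

lemma patchSlabs_mem {S : Set ℝ} {g : (Fin d → ℝ) → ℝ} (hg : ∀ x, g x ∈ S)
    {L : List (ℝ × ℝ)} (hL : ∀ tv ∈ L, tv.2 ∈ S) (x : Fin d → ℝ) :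
    patchSlabs j δ g L x ∈ S := by
  induction L with
  | nil => exact hg x
  | cons tv L ih =>
    rw [patchSlabs_cons_apply]
    split_ifs
    · exact hL tv List.mem_cons_self
    · exact ih fun tv' h => hL tv' (List.mem_cons_of_mem _ h)

lemma patchSlabs_eq_of_forall_notMem (g : (Fin d → ℝ) → ℝ) {L : List (ℝ × ℝ)}
    {x : Fin d → ℝ} (hx : ∀ tv ∈ L, x j ∉ Ioc (tv.1 - δ) tv.1) :
    patchSlabs j δ g L x = g x := by
  induction L with
  | nil => rfl
  | cons tv L ih =>
    rw [patchSlabs_cons_apply, if_neg (hx tv List.mem_cons_self)]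
    exact ih fun tv' h => hx tv' (List.mem_cons_of_mem _ h)

lemma patchSlabs_eq_of_mem (g : (Fin d → ℝ) → ℝ) {L : List (ℝ × ℝ)}
    (hL : L.Pairwise fun a b => Disjoint (Ioc (a.1 - δ) a.1) (Ioc (b.1 - δ) b.1))
    {tv : ℝ × ℝ} (htv : tv ∈ L) {x : Fin d → ℝ} (hx : x j ∈ Ioc (tv.1 - δ) tv.1) :
    patchSlabs j δ g L x = tv.2 := by
  induction L with
  | nil => simp at htv
  | cons a L ih =>
    rw [List.pairwise_cons] at hL
    rw [patchSlabs_cons_apply]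
    rcases List.mem_cons.1 htv with rfl | htv
    · exact if_pos hx
    · rw [if_neg fun ha => (hL.1 tv htv).notMem_of_mem_left ha hx]
      exact ih hL.2 htv

lemma patchSlabs_congr (g g' : (Fin d → ℝ) → ℝ) {L : List (ℝ × ℝ)} {x : Fin d → ℝ}
    (hx : ∃ tv ∈ L, x j ∈ Ioc (tv.1 - δ) tv.1) :
    patchSlabs j δ g L x = patchSlabs j δ g' L x := by
  induction L with
  | nil => simp at hx
  | cons a L ih =>
    rw [patchSlabs_cons_apply, patchSlabs_cons_apply]
    split_ifs with ha
    · rfl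
    · obtain ⟨tv, htv, hxtv⟩ := hx
      rcases List.mem_cons.1 htv with rfl | htv
      · exact absurd hxtv ha
      · exact ih ⟨tv, htv, hxtv⟩

end Slabs

section RealLine

variable (ν : Measure ℝ) [IsFiniteMeasure ν]

lemma measureReal_Iic_add_measureReal_Ioc {a b : ℝ} (hab : a ≤ b) :
    ν.real (Iic a) + ν.real (Ioc a b) = ν.real (Iic b) := by
  rw [← measureReal_union (Iic_disjoint_Ioc le_rfl) measurableSet_Ioc, Iic_union_Ioc_eq_Iic hab]

variable [NullSingletonClass ν]

lemma continuous_measureReal_Iic : Continuous fun c => ν.real (Iic c) := by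
  refine continuous_iff_continuousAt.2 fun c => ?_
  set M : ℝ → ℝ := fun δ => ν.real (Icc (c - δ) (c + δ))
  have hM : Tendsto (fun c' => M |c' - c|) (𝓝 c) (𝓝 0) := by
    have h₀ : Tendsto (fun c' => |c' - c|) (𝓝 c) (𝓝 0) := by
      simpa using (continuous_sub_right c).abs.tendsto c
    exact ((ENNReal.tendsto_toReal ENNReal.zero_ne_top).comp (tendsto_measure_Icc ν c)).comp h₀
  have hincr : ∀ a b, a ≤ b → ∀ δ, c - δ ≤ a → b ≤ c + δ →
      ν.real (Iic b) - ν.real (Iic a) ≤ M δ := fun a b hab δ ha hb => by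
    rw [← measureReal_Iic_add_measureReal_Ioc ν hab, add_sub_cancel_left]
    exact measureReal_mono (Ioc_subset_Icc_self.trans (Icc_subset_Icc ha hb))
  have hbound : ∀ c', |ν.real (Iic c') - ν.real (Iic c)| ≤ M |c' - c| := fun c' => by
    rcases le_total c c' with h | h
    · rw [abs_of_nonneg (sub_nonneg.2 (measureReal_mono (Iic_subset_Iic.2 h)))]
      exact hincr c c' h _ (by linarith [abs_nonneg (c' - c)]) (by linarith [le_abs_self (c' - c)])
    · rw [abs_sub_comm, abs_of_nonneg (sub_nonneg.2 (measureReal_mono (Iic_subset_Iic.2 h)))]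
      exact hincr c' c h _ (by linarith [neg_abs_le (c' - c)]) (by linarith [abs_nonneg (c' - c)])
  exact tendsto_iff_dist_tendsto_zero.2 (squeeze_zero (fun _ => dist_nonneg) hbound hM)

lemma exists_measureReal_Iic_eq {q : ℝ} (hq : q ∈ Ioo 0 (ν.real univ)) :
    ∃ c, ν.real (Iic c) = q := by
  have hbot : Tendsto (fun c => ν.real (Iic c)) atBot (𝓝 0) := by
    have h := tendsto_measure_iInter_atBot (μ := ν) (fun c => measurableSet_Iic.nullMeasurableSet)
      (monotone_Iic (α := ℝ)) ⟨0, measure_ne_top ν _⟩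
    rw [iInter_Iic_eq_empty_iff.2 (by simp), measure_empty] at h
    exact (ENNReal.tendsto_toReal ENNReal.zero_ne_top).comp h
  have htop : Tendsto (fun c => ν.real (Iic c)) atTop (𝓝 (ν.real univ)) :=
    (ENNReal.tendsto_toReal (measure_ne_top ν univ)).comp (tendsto_measure_Iic_atTop ν)
  obtain ⟨a, ha⟩ := (hbot.eventually (eventually_lt_nhds hq.1)).exists
  obtain ⟨b, hb⟩ := (htop.eventually (eventually_gt_nhds hq.2)).exists
  exact intermediate_value_univ a b (continuous_measureReal_Iic ν) ⟨ha.le, hb.le⟩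

lemma exists_pos_pairwise_disjoint_Ioc_measureReal_lt {k : ℕ} {τ : Fin k → ℝ}
    (hτ : Injective τ) {ε : ℝ} (hε : 0 < ε) :
    ∃ δ > 0, Pairwise (Disjoint on fun i => Ioc (τ i - δ) (τ i)) ∧
      ν.real (⋃ i, Ioc (τ i - δ) (τ i)) < ε := by
  have hsmall : ∀ᶠ δ in 𝓝 0, ∑ i, ν.real (Icc (τ i - δ) (τ i + δ)) < ε := by
    have h := tendsto_finsetSum Finset.univ fun i _ =>
      (ENNReal.tendsto_toReal ENNReal.zero_ne_top).comp (tendsto_measure_Icc ν (τ i))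
    simp only [ENNReal.toReal_zero, Finset.sum_const_zero] at h
    exact h.eventually (eventually_lt_nhds hε)
  have hgap : ∀ᶠ δ in 𝓝 (0 : ℝ), ∀ i i', i ≠ i' → δ < |τ i - τ i'| := by
    simp only [eventually_all]
    intro i i' h
    exact eventually_lt_nhds (abs_pos.2 (sub_ne_zero.2 (hτ.ne h)))
  obtain ⟨δ, ⟨hδsmall, hδgap⟩, hδ⟩ :=
    (((hsmall.and hgap).filter_mono nhdsWithin_le_nhds).and
      (self_mem_nhdsWithin (s := Ioi (0 : ℝ)))).exists
  refine ⟨δ, hδ, fun i i' h => ?_, ?_⟩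
  · rcases lt_abs.1 (hδgap i i' h) with h' | h'
    · exact (Ioc_disjoint_Ioc_of_le (by linarith)).symm
    · exact Ioc_disjoint_Ioc_of_le (by linarith)
  · refine (measureReal_iUnion_fintype_le _).trans_lt (lt_of_le_of_lt ?_ hδsmall)
    exact Finset.sum_le_sum fun i _ => measureReal_mono
      (Ioc_subset_Icc_self.trans (Icc_subset_Icc le_rfl (by linarith [show (0 : ℝ) < δ from hδ])))

end RealLine

section Pushforward

variable {α : Type*} [MeasurableSpace α] {μ : Measure α} {φ : α → ℝ}

lemma nullSingletonClass_map (hφ : Measurable φ) (hnull : ∀ t, μ (φ ⁻¹' {t}) = 0) :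
    NullSingletonClass (μ.map φ) :=
  ⟨fun t => by rw [Measure.map_apply hφ (measurableSet_singleton t), hnull]⟩

lemma nullSingletonClass_map_restrict (hφ : Measurable φ) (hnull : ∀ t, μ (φ ⁻¹' {t}) = 0)
    (A : Set α) : NullSingletonClass ((μ.restrict A).map φ) :=
  nullSingletonClass_map hφ fun t =>
    nonpos_iff_eq_zero.1 ((Measure.restrict_apply_le A _).trans_eq (hnull t))

lemma measureReal_map_restrict_apply (hφ : Measurable φ) (A : Set α) {S : Set ℝ}
    (hS : MeasurableSet S) : ((μ.restrict A).map φ).real S = μ.real (A ∩ φ ⁻¹' S) := by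
  rw [map_measureReal_apply hφ hS, measureReal_restrict_apply (hφ hS), inter_comm]

variable [IsFiniteMeasure μ] (hφ : Measurable φ) (hnull : ∀ t, μ (φ ⁻¹' {t}) = 0) (A : Set α)
include hφ hnull

lemma exists_measureReal_inter_preimage_Iic_eq {q : ℝ} (hq : q ∈ Ioo 0 (μ.real A)) :
    ∃ c, μ.real (A ∩ φ ⁻¹' Iic c) = q := by
  have := nullSingletonClass_map_restrict hφ hnull A
  simp only [← measureReal_map_restrict_apply hφ A measurableSet_Iic]
  refine exists_measureReal_Iic_eq _ ?_
  rwa [measureReal_map_restrict_apply hφ A MeasurableSet.univ, preimage_univ, inter_univ]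

lemma exists_pos_pairwise_disjoint_Ioc_measureReal_preimage_lt {k : ℕ} {τ : Fin k → ℝ}
    (hτ : Injective τ) {ε : ℝ} (hε : 0 < ε) :
    ∃ δ > 0, Pairwise (Disjoint on fun i => Ioc (τ i - δ) (τ i)) ∧
      μ.real (A ∩ φ ⁻¹' ⋃ i, Ioc (τ i - δ) (τ i)) < ε := by
  have := nullSingletonClass_map_restrict hφ hnull A
  simp only [← measureReal_map_restrict_apply hφ A
    (MeasurableSet.iUnion fun _ => measurableSet_Ioc)]
  exact exists_pos_pairwise_disjoint_Ioc_measureReal_lt _ hτ hε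

end Pushforward

lemma measureReal_sep_eq_add {α : Type*} [MeasurableSpace α] {μ : Measure α} [IsFiniteMeasure μ]
    {X D C : Set α} {P : α → Prop} (hX : MeasurableSet X) (hD : MeasurableSet D)
    (hC : MeasurableSet C) (hP : ∀ x ∉ D, P x ↔ x ∈ C) :
    μ.real {x | x ∈ X ∧ P x} = μ.real {x | x ∈ X ∩ D ∧ P x} + μ.real (X \ D ∩ C) := by
  rw [← measureReal_union _ ((hX.diff hD).inter hC)]
  · congr 1
    ext x
    by_cases hx : x ∈ D <;> simp [hx, hP]
  · exact disjoint_left.2 fun x hx hx' => hx'.1.2 hx.1.2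

lemma Real.sign_sign (y : ℝ) : Real.sign (Real.sign y) = Real.sign y := by
  rcases Real.sign_apply_eq y with h | h | h <;> simp [h, Real.sign_neg]

lemma Real.sign_mem_Icc (y : ℝ) : Real.sign y ∈ Icc (-1 : ℝ) 1 := by
  rcases Real.sign_apply_eq y with h | h | h <;> simp [h]

lemma Real.exists_mem_Icc_sign_ne (y : ℝ) : ∃ b ∈ Icc (-1 : ℝ) 1, Real.sign b ≠ Real.sign y := by
  rcases lt_trichotomy y 0 with hy | rfl | hy
  · exact ⟨1, by norm_num, by norm_num [Real.sign_of_neg hy]⟩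
  · exact ⟨1, by norm_num, by simp [Real.sign_zero]⟩
  · exact ⟨-1, by norm_num, by norm_num [Real.sign_of_pos hy, Real.sign_neg]⟩

lemma measureReal_sign_patchSlabs_threshold {d : ℕ} (j : Fin d) (δ c : ℝ) (L : List (ℝ × ℝ))
    {μ : Measure (Fin d → ℝ)} [IsFiniteMeasure μ] {XR D : Set (Fin d → ℝ)}
    (hXR : MeasurableSet XR) (hD : MeasurableSet D)
    (hmemD : ∀ x, x ∈ D ↔ ∃ tv ∈ L, x j ∈ Ioc (tv.1 - δ) tv.1) {y b : ℝ}
    (hb : Real.sign b ≠ Real.sign y) :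
    μ.real {x | x ∈ XR ∧
        Real.sign (patchSlabs j δ (fun x => if x j ≤ c then Real.sign y else b) L x) =
          Real.sign y} =
      μ.real {x | x ∈ XR ∩ D ∧ Real.sign (patchSlabs j δ 0 L x) = Real.sign y} +
        μ.real (XR \ D ∩ (fun x => x j) ⁻¹' Iic c) := by
  rw [measureReal_sep_eq_add hXR hD (measurable_pi_apply j measurableSet_Iic) fun x hx => ?_]
  · congr 2
    ext x
    exact and_congr_right fun hx => by rw [patchSlabs_congr j δ _ 0 ((hmemD x).1 hx.2)]
  · rw [patchSlabs_eq_of_forall_notMem j δ _ fun tv htv hxtv => hx ((hmemD x).2 ⟨tv, htv, hxtv⟩)]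
    by_cases hxc : x j ≤ c
    · simp only [hxc, if_true, Real.sign_sign, mem_preimage, mem_Iic]
    · simp only [hxc, if_false, hb, mem_preimage, mem_Iic]

theorem exists_isTree_interpolating_with_precision {d : ℕ} (j : Fin d) {μ : Measure (Fin d → ℝ)}
    [IsFiniteMeasure μ] (hnull : ∀ t, μ ((fun x => x j) ⁻¹' {t}) = 0)
    {XR : Set (Fin d → ℝ)} (hXR : MeasurableSet XR) (hcov : 0 < μ XR) {p : ℝ} (hp : p ∈ Ioo 0 1)
    {k : ℕ} {τ : Fin k → ℝ} (hτ : Injective τ) {v : Fin k → ℝ} (hv : ∀ i, v i ∈ Icc (-1 : ℝ) 1)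
    (y : ℝ) :
    ∃ g, (∃ K, IsTree K g) ∧ (∀ x, g x ∈ Icc (-1 : ℝ) 1) ∧ (∀ i x, x j = τ i → g x = v i) ∧
      μ.real {x | x ∈ XR ∧ Real.sign (g x) = Real.sign y} = p * μ.real XR := by
  have hj : Measurable fun x : Fin d → ℝ => x j := measurable_pi_apply j
  have hμXR : 0 < μ.real XR := ENNReal.toReal_pos hcov.ne' (measure_ne_top μ XR)
  obtain ⟨δ, hδ, hdisj, hγ⟩ := exists_pos_pairwise_disjoint_Ioc_measureReal_preimage_lt hj hnull
    XR hτ (mul_pos (lt_min hp.1 (sub_pos.2 hp.2)) hμXR)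
  set L := List.ofFn fun i => (τ i, v i)
  set D := (fun x : Fin d → ℝ => x j) ⁻¹' ⋃ i, Ioc (τ i - δ) (τ i)
  have hD : MeasurableSet D := hj (MeasurableSet.iUnion fun _ => measurableSet_Ioc)
  have hmemD : ∀ x, x ∈ D ↔ ∃ tv ∈ L, x j ∈ Ioc (tv.1 - δ) tv.1 := fun x => by
    simp [D, L, List.mem_ofFn]
  have hγp : min p (1 - p) * μ.real XR ≤ p * μ.real XR :=
    mul_le_mul_of_nonneg_right (min_le_left _ _) hμXR.le
  have hγp' : min p (1 - p) * μ.real XR ≤ (1 - p) * μ.real XR :=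
    mul_le_mul_of_nonneg_right (min_le_right _ _) hμXR.le
  -- on the slabs the patched tree ignores its base, so this mass is fixed before `c` is chosen
  set a := μ.real {x | x ∈ XR ∩ D ∧ Real.sign (patchSlabs j δ 0 L x) = Real.sign y}
  have ha : a ≤ μ.real (XR ∩ D) := measureReal_mono fun x hx => hx.1
  have ha₀ : 0 ≤ a := measureReal_nonneg
  have hA : μ.real (XR \ D) + μ.real (XR ∩ D) = μ.real XR := measureReal_sdiff_add_inter hD
  obtain ⟨c, hc⟩ := exists_measureReal_inter_preimage_Iic_eq hj hnull (XR \ D)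
    (q := p * μ.real XR - a) ⟨by linarith, by linarith⟩
  obtain ⟨b, hb, hbsign⟩ := Real.exists_mem_Icc_sign_ne y
  have hg₀ : IsTree 1 fun x => if x j ≤ c then Real.sign y else b :=
    (IsTree.const _ 0).split j c (IsTree.const b 0)
  refine ⟨_, ⟨_, hg₀.patchSlabs j δ L⟩, patchSlabs_mem j δ (fun x => ?_) (fun tv htv => ?_),
    fun i x hx => ?_, ?_⟩
  · split_ifs
    exacts [Real.sign_mem_Icc y, hb]
  · obtain ⟨i, rfl⟩ := List.mem_ofFn.1 htv
    exact hv i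
  · refine patchSlabs_eq_of_mem j δ _ (List.pairwise_ofFn.2 fun i i' h => hdisj h.ne)
      (List.mem_ofFn.2 ⟨i, rfl⟩) ?_
    rw [hx]
    exact ⟨by linarith, le_rfl⟩
  · rw [measureReal_sign_patchSlabs_threshold j δ c L hXR hD hmemD hbsign, hc]
    ring

lemma MeasureTheory.Measure.prod_diagonal_eq_zero (ν₁ ν₂ : Measure ℝ) [SFinite ν₂]
    [NullSingletonClass ν₂] :
    ν₁.prod ν₂ (diagonal ℝ) = 0 := by
  rw [Measure.prod_apply measurableSet_diagonal]
  have hslice : ∀ x : ℝ, Prod.mk x ⁻¹' diagonal ℝ = {x} := fun x => by ext; simp [eq_comm]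
  simp [hslice]

section Sample

variable {β : Type*} [MeasurableSpace β] (ν : Measure β) [IsProbabilityMeasure ν] {ψ : β → ℝ}

lemma ae_injective_pi (hψ : Measurable ψ) (hnull : ∀ t, ν (ψ ⁻¹' {t}) = 0) (n : ℕ) :
    ∀ᵐ ω ∂Measure.pi fun _ : Fin n => ν, Injective fun i => ψ (ω i) := by
  have := nullSingletonClass_map hψ hnull
  have hpair : ∀ i i' : Fin n, i ≠ i' →
      ∀ᵐ ω ∂Measure.pi fun _ : Fin n => ν, ψ (ω i) ≠ ψ (ω i') := fun i i' h => by
    have hX : ∀ i : Fin n, Measure.map (fun ω => ψ (ω i)) (Measure.pi fun _ => ν) = ν.map ψ :=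
      fun i => (Measure.map_map hψ (measurable_pi_apply i)).symm.trans
        (congrArg (Measure.map ψ) (measurePreserving_eval (fun _ : Fin n => ν) i).map_eq)
    have hXm : ∀ i : Fin n, Measurable fun ω : Fin n → β => ψ (ω i) :=
      fun i => hψ.comp (measurable_pi_apply i)
    have hind := (ProbabilityTheory.iIndepFun_pi (μ := fun _ : Fin n => ν) (X := fun _ => ψ)
      fun _ => hψ.aemeasurable).indepFun h
    rw [ProbabilityTheory.indepFun_iff_map_prod_eq_prod_map_map (hXm i).aemeasurable
      (hXm i').aemeasurable, hX, hX] at hind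
    rw [ae_iff]
    simpa [← hind, Measure.map_apply ((hXm i).prodMk (hXm i')) measurableSet_diagonal,
      preimage, mem_diagonal_iff] using Measure.prod_diagonal_eq_zero (ν.map ψ) (ν.map ψ)
  simp only [← ae_all_iff] at hpair
  filter_upwards [hpair] with ω hω i i' h using not_imp_not.1 (hω i i') h

lemma ae_injective_cons_pi (hψ : Measurable ψ) (hnull : ∀ t, ν (ψ ⁻¹' {t}) = 0) (t₀ : ℝ)
    (n : ℕ) :
    ∀ᵐ ω ∂Measure.pi fun _ : Fin n => ν,
      Injective (Fin.cons t₀ fun i => ψ (ω i) : Fin (n + 1) → ℝ) := by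
  have hne : ∀ᵐ ω ∂Measure.pi fun _ : Fin n => ν, ∀ i, ψ (ω i) ≠ t₀ := ae_all_iff.2 fun i =>
    (measurePreserving_eval (fun _ : Fin n => ν) i).quasiMeasurePreserving.ae
      (show ∀ᵐ b ∂ν, ψ b ≠ t₀ from
        ae_iff.2 (measure_mono_null (fun _ hb => not_not.1 hb) (hnull t₀)))
  filter_upwards [hne, ae_injective_pi ν hψ hnull n] with ω hne hinj
  exact Fin.cons_injective_iff.2 ⟨fun ⟨i, hi⟩ => hne i hi, hinj⟩

end Sample

lemma ae_injective_cons_sampleMeasure {α : Type*} [MeasurableSpace α] (μ : Measure α)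
    [IsProbabilityMeasure μ] {φ : α → ℝ} (hφ : Measurable φ) (hnull : ∀ t, μ (φ ⁻¹' {t}) = 0)
    (t₀ : ℝ) (n : ℕ) :
    ∀ᵐ ω ∂sampleMeasure μ n, Injective (Fin.cons t₀ fun i => φ (ω i).1 : Fin (n + 1) → ℝ) := by
  have : IsProbabilityMeasure
      ((2 : ℝ≥0∞)⁻¹ • Measure.dirac (-1 : ℝ) + (2 : ℝ≥0∞)⁻¹ • Measure.dirac (1 : ℝ)) :=
    ⟨by simp [ENNReal.inv_two_add_inv_two]⟩
  refine ae_injective_cons_pi _ (hφ.comp measurable_fst) (fun t => ?_) t₀ n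
  rw [preimage_comp, ← prod_univ, Measure.prod_prod, hnull, zero_mul]

lemma Real.self_mul_sign (σ : ℝ) : σ * Real.sign σ = |σ| := by
  rcases lt_trichotomy σ 0 with h | rfl | h
  · simp [Real.sign_of_neg h, abs_of_neg h]
  · simp
  · simp [Real.sign_of_pos h, abs_of_pos h]

lemma isGreatest_image_correlation {α : Type*} {n : ℕ} (ω : Fin n → α × ℝ) {S : Set (α → ℝ)}
    (hS : ∀ g ∈ S, ∀ x, g x ∈ Icc (-1 : ℝ) 1) {g : α → ℝ} (hg : g ∈ S)
    (hgω : ∀ i, g (ω i).1 = Real.sign (ω i).2) :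
    IsGreatest ((fun g => (n : ℝ)⁻¹ * ∑ i, (ω i).2 * g (ω i).1) '' S)
      ((n : ℝ)⁻¹ * ∑ i, |(ω i).2|) := by
  refine ⟨⟨g, hg, by simp only [hgω, Real.self_mul_sign]⟩, ?_⟩
  rintro _ ⟨g', hg', rfl⟩
  refine mul_le_mul_of_nonneg_left (Finset.sum_le_sum fun i _ => ?_) (by positivity)
  calc (ω i).2 * g' (ω i).1 ≤ |(ω i).2| * |g' (ω i).1| := (le_abs_self _).trans (abs_mul _ _).le
    _ ≤ |(ω i).2| := mul_le_of_le_one_right (abs_nonneg _) (abs_le.2 (hS g' hg' _))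

theorem anchors_nonperfect_noninformative_on_unbounded_trees_general
    {d : ℕ} (hd : 0 < d)
    (μ : Measure (Fin d → ℝ)) [IsProbabilityMeasure μ]
    (ρ : (Fin d → ℝ) → ℝ≥0∞) (hdens : μ = volume.withDensity ρ)
    (F : Set ((Fin d → ℝ) → ℝ))
    (hF : F = {g | (∃ K, IsTree K g) ∧ ∀ x, g x ∈ Set.Icc (-1 : ℝ) 1})
    (f : (Fin d → ℝ) → ℝ) (hf : f ∈ F) (x₀ : Fin d → ℝ)
    (I : Fin d → Set ℝ) (hI : ∀ j, (I j).OrdConnected)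
    (XR : Set (Fin d → ℝ)) (hXR : XR = {x | ∀ j, x j ∈ I j})
    (hcov : 0 < μ XR)
    (p : ℝ) (hp₀ : 0 < p) (hp₁ : p < 1)
    (n : ℕ) :
    rademacher μ n {g ∈ F | g x₀ = f x₀ ∧ precision μ XR g x₀ = p} =
      rademacher μ n {g ∈ F | g x₀ = f x₀} := by
  set j : Fin d := ⟨0, hd⟩
  have hnull : ∀ t, μ ((fun x => x j) ⁻¹' {t}) = 0 := fun t =>
    hdens ▸ withDensity_absolutelyContinuous volume ρ
      (Measure.pi_eval_preimage_null (fun _ => volume) (Real.volume_singleton))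
  have hXRm : MeasurableSet XR := by
    convert MeasurableSet.univ_pi fun j => (hI j).measurableSet using 1
    ext
    simp [hXR]
  have hFb : ∀ g ∈ F, ∀ x, g x ∈ Icc (-1 : ℝ) 1 := hF ▸ fun g hg => hg.2
  refine integral_congr_ae ?_
  filter_upwards [ae_injective_cons_sampleMeasure μ (measurable_pi_apply j) hnull (x₀ j) n]
    with ω hω
  obtain ⟨g, hgT, hgb, hgv, hgμ⟩ := exists_isTree_interpolating_with_precision j hnull hXRm hcov
    ⟨hp₀, hp₁⟩ hω (v := Fin.cons (f x₀) fun i => Real.sign (ω i).2)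
    (Fin.forall_fin_succ.2 ⟨hFb f hf x₀, fun i => Real.sign_mem_Icc _⟩) (f x₀)
  have hgx₀ : g x₀ = f x₀ := hgv 0 x₀ rfl
  have hgF : g ∈ F := hF ▸ ⟨hgT, hgb⟩
  have hgprec : precision μ XR g x₀ = p := by
    rw [precision, hgx₀]
    exact (div_eq_iff (ENNReal.toReal_pos hcov.ne' (measure_ne_top _ _)).ne').2 hgμ
  have hgω : ∀ i, g (ω i).1 = Real.sign (ω i).2 := fun i => hgv i.succ _ rfl
  have hsup : ∀ S ⊆ F, g ∈ S → sSup ((fun g => (n : ℝ)⁻¹ * ∑ i, (ω i).2 * g (ω i).1) '' S) =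
      (n : ℝ)⁻¹ * ∑ i, |(ω i).2| := fun S hSF hgS =>
    (isGreatest_image_correlation ω (fun g hg => hFb g (hSF hg)) hgS hgω).csSup_eq
  refine (hsup _ (fun _ h => h.1) ?_).trans (hsup _ (fun _ h => h.1) ?_).symm
  exacts [⟨hgF, hgx₀, hgprec⟩, ⟨hgF, hgx₀⟩]

/-- **Non-perfect anchors on decision trees of arbitrary depth are not informative.**
The anchor rule is an axis-aligned box `XR = ∏_j I_j` (each `I_j` an interval) containing
`x₀`, with precision `p`, `0 < p < 1`, for `f` at `x₀`. -/
theorem anchors_nonperfect_noninformative_on_unbounded_trees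
    {d : ℕ} (hd : 0 < d)
    (μ : Measure (Fin d → ℝ)) [IsProbabilityMeasure μ]
    (ρ : (Fin d → ℝ) → ℝ≥0∞) (hdens : μ = volume.withDensity ρ)
    (F : Set ((Fin d → ℝ) → ℝ))
    (hF : F = {g | (∃ K, IsTree K g) ∧ ∀ x, g x ∈ Set.Icc (-1 : ℝ) 1})
    (f : (Fin d → ℝ) → ℝ) (hf : f ∈ F) (x₀ : Fin d → ℝ)
    (I : Fin d → Set ℝ) (hI : ∀ j, (I j).OrdConnected)
    (XR : Set (Fin d → ℝ)) (hXR : XR = {x | ∀ j, x j ∈ I j})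
    (hx₀ : x₀ ∈ XR) (hcov : 0 < μ XR)
    (p : ℝ) (hp₀ : 0 < p) (hp₁ : p < 1) (hprec : precision μ XR f x₀ = p)
    (n : ℕ) :
    rademacher μ n {g ∈ F | g x₀ = f x₀ ∧ precision μ XR g x₀ = p} =
      rademacher μ n {g ∈ F | g x₀ = f x₀} :=
  anchors_nonperfect_noninformative_on_unbounded_trees_general hd μ ρ hdens F hF f hf x₀ I hI XR hXR
    hcov p hp₀ hp₁ n
end
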